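/- arXiv:1909.12530 — 3 statements merged into one kernel-verified Lean document; each statement's English description precedes it below -/
import Mathlib

section
/- Let Ψ be a p×p positive definite diagonal matrix and S a p×p positive semidefinite matrix. Let Ψ^{-1/2} S Ψ^{-1/2} = U Λ Uᵀ be an eigenvalue decomposition with eigenvalues λ₁ ≥ ⋯ ≥ λ_p, and define B* = Ψ^{1/2} U D^{1/2} where D = Diag(d₁,…,d_r,0,…,0) with d_i = max(λ_i − 1, 0). Then B* maximizes the function B ↦ log det((BBᵀ + Ψ)^{-1}) − Tr((BBᵀ + Ψ)^{-1} S) over all p×r real matrices B. -/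
/-!
Whitening by `A = Ψ^{1/2} U`, for which `A Aᵀ = Ψ` and `A Λ Aᵀ = S`, turns the objective at `B`
into the objective at `K = A⁻¹ B` for the covariance `K Kᵀ + 1` and the diagonal sample matrix
`Λ`, shifted by the constant `-log (det A)²`. Rotating `K` on the right does not change `K Kᵀ`,
so its columns `k_j` may be taken orthogonal; with `γ_j = ‖k_j‖²` the objective then splits as
`∑_j ((1 + γ_j)⁻¹ k_jᵀ Λ k_j - log (1 + γ_j)) - tr Λ`. Writing `h x = logGap (max x 1)`, the
`j`-th term is at most `h` of the Rayleigh quotient of `k_j`, hence by Jensen at most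
`∑_i (k_ij² / γ_j) h(λ_i)`. These weights have row sums `≤ 1` (the diagonal of the orthogonal
projection onto the columns of `K`) and total mass `≤ r`; since `h ∘ λ` is nonnegative and
decreasing, the bound is at most `∑_{i<r} h(λ_i) - tr Λ`, the value attained at `B*`.
-/

open Matrix Real

noncomputable def logGap (x : ℝ) : ℝ := x - 1 - log x

lemma logGap_nonneg {x : ℝ} (hx : 0 < x) : 0 ≤ logGap x := by
  have := log_le_sub_one_of_pos hx
  unfold logGap; linarith

lemma monotoneOn_logGap : MonotoneOn logGap (Set.Ici 1) := by
  intro x (hx : 1 ≤ x) y (_ : 1 ≤ y) hxy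
  have hx0 : 0 < x := by linarith
  have h := log_le_sub_one_of_pos (div_pos (hx0.trans_le hxy) hx0)
  rw [log_div (by linarith) hx0.ne'] at h
  have : y / x - 1 ≤ y - x := by
    rw [div_sub_one hx0.ne', div_le_iff₀ hx0]; nlinarith
  unfold logGap; linarith

lemma convexOn_logGap : ConvexOn ℝ (Set.Ioi 0) logGap :=
  ((convexOn_id (convex_Ioi 0)).sub (concaveOn_const 1 (convex_Ioi 0))).sub
    strictConcaveOn_log_Ioi.concaveOn

lemma monotone_logGap_max_one : Monotone fun x => logGap (max x 1) :=
  fun x y hxy => monotoneOn_logGap (le_max_right x 1) (le_max_right y 1) (max_le_max_right 1 hxy)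

lemma convexOn_logGap_max_one : ConvexOn ℝ Set.univ fun x => logGap (max x 1) := by
  have himage : (fun x : ℝ => max x 1) '' Set.univ = Set.Ici 1 := by
    ext y
    refine ⟨fun ⟨x, _, hx⟩ => hx ▸ le_max_right x 1, fun hy => ⟨y, trivial, max_eq_left hy⟩⟩
  refine ConvexOn.comp (g := logGap) ?_
    ((convexOn_id convex_univ).sup (convexOn_const 1 convex_univ)) ?_
  · rw [himage]
    exact convexOn_logGap.subset (fun x (hx : 1 ≤ x) => zero_lt_one.trans_le hx) (convex_Ici 1)
  · rw [himage]; exact monotoneOn_logGap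

-- Equality holds at `s = max (m - 1) 0`, which is where the loadings `B*` come from.
lemma mul_div_one_add_sub_log_le {s : ℝ} (hs : 0 ≤ s) (m : ℝ) :
    s * m / (1 + s) - log (1 + s) ≤ logGap (max m 1) := by
  have h1s : 0 < 1 + s := by linarith
  rcases le_total m 1 with hm | hm
  · have hlog := one_sub_inv_le_log_of_pos h1s
    have : s * m / (1 + s) ≤ 1 - (1 + s)⁻¹ := by
      rw [div_le_iff₀ h1s]; field_simp; nlinarith
    rw [max_eq_right hm, logGap, log_one]; linarith
  · have hm0 : 0 < m := by linarith
    have hlog := log_le_sub_one_of_pos (div_pos hm0 h1s)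
    rw [log_div hm0.ne' h1s.ne'] at hlog
    have : s * m / (1 + s) = m - m / (1 + s) := by field_simp; ring
    rw [max_eq_left hm, logGap]; linarith

lemma neg_log_max_one_sub_inv_mul (x : ℝ) :
    -log (max x 1) - (max x 1)⁻¹ * x = logGap (max x 1) - x := by
  rcases le_total x 1 with hx | hx
  · simp [max_eq_right hx, logGap]
  · rw [max_eq_left hx, inv_mul_cancel₀ (by linarith), logGap]; ring

lemma sum_mul_le_sum_ite_lt {p r : ℕ} {c g : Fin p → ℝ}
    (hc0 : ∀ i, 0 ≤ c i) (hc1 : ∀ i, c i ≤ 1) (hcr : ∑ i, c i ≤ r)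
    (hg0 : ∀ i, 0 ≤ g i) (hg : Antitone g) :
    ∑ i, c i * g i ≤ ∑ i : Fin p, if (i : ℕ) < r then g i else 0 := by
  rcases lt_or_ge r p with hrp | hpr
  · -- compare every term with the threshold value `g r`
    set τ := g ⟨r, hrp⟩
    have hterm (i : Fin p) :
        c i * g i ≤
          (if (i : ℕ) < r then g i else 0) + (c i - if (i : ℕ) < r then 1 else 0) * τ := by
      split_ifs with hi
      · have : τ ≤ g i := hg (Fin.mk_le_mk.mpr hi.le)
        nlinarith [hc1 i]
      · have : g i ≤ τ := hg (Fin.le_def.mpr (not_lt.mp hi))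
        nlinarith [hc0 i]
    have hcount : ∑ i : Fin p, (if (i : ℕ) < r then (1 : ℝ) else 0) = r := by
      rw [Finset.sum_boole, Fin.card_filter_val_lt, min_eq_right hrp.le]
    calc ∑ i, c i * g i
        ≤ ∑ i : Fin p,
            ((if (i : ℕ) < r then g i else 0) + (c i - if (i : ℕ) < r then 1 else 0) * τ) :=
          Finset.sum_le_sum fun i _ => hterm i
      _ = (∑ i : Fin p, if (i : ℕ) < r then g i else 0) + (∑ i, c i - r) * τ := by
          rw [Finset.sum_add_distrib, ← Finset.sum_mul, Finset.sum_sub_distrib, hcount]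
      _ ≤ ∑ i : Fin p, if (i : ℕ) < r then g i else 0 := by
          nlinarith [hg0 ⟨r, hrp⟩]
  · have hall (i : Fin p) : (i : ℕ) < r := i.isLt.trans_le hpr
    simp only [hall, if_true]
    exact Finset.sum_le_sum fun i _ => mul_le_of_le_one_left (hg0 i) (hc1 i)

namespace Matrix

variable {m n : Type*} [Fintype m]

lemma diag_le_one_of_isIdempotentElem [Fintype n] {P : Matrix n n ℝ} (hPt : Pᵀ = P)
    (hPP : IsIdempotentElem P) (i : n) : P i i ≤ 1 := by
  have hrow : P i i = ∑ k, P i k ^ 2 := by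
    conv_lhs => rw [← hPP, mul_apply]
    refine Finset.sum_congr rfl fun k _ => ?_
    rw [sq, ← transpose_apply P i k, hPt]
  have : P i i ^ 2 ≤ P i i :=
    hrow ▸ Finset.single_le_sum (fun k _ => sq_nonneg (P i k)) (Finset.mem_univ i)
  nlinarith

lemma transpose_mul_self_eq_diagonal [DecidableEq n] {K : Matrix m n ℝ}
    (hK : (Kᵀ * K).IsDiag) : Kᵀ * K = diagonal fun j => ∑ i, K i j ^ 2 := by
  rw [← hK.diagonal_diag]
  congr 1
  ext j
  simp [mul_apply, sq]

lemma sum_sq_mul_inv_sum_sq_le_one [Fintype n] [DecidableEq n] {K : Matrix m n ℝ}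
    (hK : (Kᵀ * K).IsDiag) (i : m) : ∑ j, K i j ^ 2 * (∑ k, K k j ^ 2)⁻¹ ≤ 1 := by
  set γ : n → ℝ := fun j => ∑ k, K k j ^ 2
  -- the orthogonal projection onto the column space of `K`
  set P := K * diagonal γ⁻¹ * Kᵀ with hP
  have hPt : Pᵀ = P := by simp [P, transpose_mul, Matrix.mul_assoc]
  have hPP : IsIdempotentElem P := by
    have : diagonal γ⁻¹ * (Kᵀ * K) * diagonal γ⁻¹ = diagonal γ⁻¹ := by
      rw [transpose_mul_self_eq_diagonal hK, diagonal_mul_diagonal, diagonal_mul_diagonal]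
      congr 1; ext j
      change (γ j)⁻¹ * γ j * (γ j)⁻¹ = (γ j)⁻¹
      rcases eq_or_ne (γ j) 0 with h | h
      · simp [h]
      · rw [inv_mul_cancel₀ h, one_mul]
    calc P * P = K * (diagonal γ⁻¹ * (Kᵀ * K) * diagonal γ⁻¹) * Kᵀ := by
          simp only [P, Matrix.mul_assoc]
      _ = P := by rw [this]
  have hPi : P i i = ∑ j, K i j ^ 2 * (γ j)⁻¹ := by
    rw [hP, mul_apply]
    refine Finset.sum_congr rfl fun j _ => ?_
    rw [mul_diagonal, transpose_apply, Pi.inv_apply]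
    ring
  exact hPi ▸ diag_le_one_of_isIdempotentElem hPt hPP i

end Matrix

section

variable {m n : Type*} [Fintype m] [Fintype n] [DecidableEq n]

noncomputable def gaussianLogLik (V S : Matrix n n ℝ) : ℝ := log V⁻¹.det - (V⁻¹ * S).trace

lemma posDef_mul_transpose_add_one (K : Matrix n m ℝ) : (K * Kᵀ + 1).PosDef :=
  conjTranspose_eq_transpose_of_trivial K ▸
    PosDef.posSemidef_add (posSemidef_self_mul_conjTranspose K) PosDef.one

lemma gaussianLogLik_conj {A V : Matrix n n ℝ} (hA : IsUnit A.det) (hV : IsUnit V.det)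
    (S : Matrix n n ℝ) :
    gaussianLogLik (A * V * Aᵀ) (A * S * Aᵀ) = gaussianLogLik V S - log (A.det ^ 2) := by
  have hAt : IsUnit Aᵀ.det := by rwa [det_transpose]
  have hinv : (A * V * Aᵀ)⁻¹ = Aᵀ⁻¹ * V⁻¹ * A⁻¹ := by
    rw [Matrix.mul_inv_rev, Matrix.mul_inv_rev, Matrix.mul_assoc]
  have hdet : (A * V * Aᵀ)⁻¹.det = V⁻¹.det * (A.det ^ 2)⁻¹ := by
    simp only [hinv, det_mul, det_nonsing_inv, det_transpose, Ring.inverse_eq_inv']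
    ring
  have htrace : ((A * V * Aᵀ)⁻¹ * (A * S * Aᵀ)).trace = (V⁻¹ * S).trace := by
    rw [hinv]
    calc (Aᵀ⁻¹ * V⁻¹ * A⁻¹ * (A * S * Aᵀ)).trace
        = (Aᵀ⁻¹ * (V⁻¹ * (A⁻¹ * A) * S * Aᵀ)).trace := by simp only [Matrix.mul_assoc]
      _ = (V⁻¹ * S * (Aᵀ * Aᵀ⁻¹)).trace := by
          rw [nonsing_inv_mul _ hA, Matrix.mul_one, trace_mul_comm, Matrix.mul_assoc]
      _ = (V⁻¹ * S).trace := by rw [mul_nonsing_inv _ hAt, Matrix.mul_one]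
  have hVdet : V⁻¹.det ≠ 0 := (isUnit_nonsing_inv_det V hV).ne_zero
  rw [gaussianLogLik, gaussianLogLik, hdet, htrace,
    log_mul hVdet (inv_ne_zero (pow_ne_zero 2 hA.ne_zero)), log_inv]
  ring

lemma gaussianLogLik_add_mul_transpose {A : Matrix n n ℝ} (hA : IsUnit A.det) (B : Matrix n m ℝ)
    (M : Matrix n n ℝ) :
    gaussianLogLik (B * Bᵀ + A * Aᵀ) (A * M * Aᵀ) =
      gaussianLogLik ((A⁻¹ * B) * (A⁻¹ * B)ᵀ + 1) M - log (A.det ^ 2) := by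
  have hB : A * ((A⁻¹ * B) * (A⁻¹ * B)ᵀ + 1) * Aᵀ = B * Bᵀ + A * Aᵀ := by
    rw [Matrix.mul_add, Matrix.add_mul, Matrix.mul_one, ← Matrix.mul_assoc,
      Matrix.mul_assoc _ _ Aᵀ, ← transpose_mul, mul_nonsing_inv_cancel_left _ _ hA]
  rw [← hB, gaussianLogLik_conj hA
    ((isUnit_iff_isUnit_det _).mp (posDef_mul_transpose_add_one _).isUnit)]

lemma gaussianLogLik_diagonal {a : n → ℝ} (ha : ∀ i, 0 < a i) (lam : n → ℝ) :
    gaussianLogLik (diagonal a) (diagonal lam) = ∑ i, (-log (a i) - (a i)⁻¹ * lam i) := by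
  have hinv : (diagonal a)⁻¹ = diagonal a⁻¹ :=
    inv_eq_left_inv (by rw [diagonal_mul_diagonal]; simp [fun i => (ha i).ne'])
  simp only [gaussianLogLik, hinv, det_diagonal, diagonal_mul_diagonal, trace_diagonal,
    Pi.inv_apply]
  rw [log_prod fun i _ => (inv_pos.mpr (ha i)).ne', ← Finset.sum_sub_distrib]
  simp [log_inv, sub_eq_add_neg]

variable [DecidableEq m]

lemma trace_mul_diagonal_mul_transpose_mul_diagonal (K : Matrix m n ℝ) (d : n → ℝ)
    (lam : m → ℝ) :
    (K * diagonal d * Kᵀ * diagonal lam).trace = ∑ j, d j * ∑ i, lam i * K i j ^ 2 := by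
  simp only [trace, diag_apply, mul_diagonal, mul_apply (M := K * diagonal d), transpose_apply,
    Finset.mul_sum, Finset.sum_mul]
  rw [Finset.sum_comm]
  refine Finset.sum_congr rfl fun j _ => Finset.sum_congr rfl fun i _ => by ring

lemma gaussianLogLik_mul_transpose_add_one_of_isDiag {K : Matrix m n ℝ} (hK : (Kᵀ * K).IsDiag)
    (lam : m → ℝ) :
    gaussianLogLik (K * Kᵀ + 1) (diagonal lam) =
      ∑ j, ((1 + ∑ i, K i j ^ 2)⁻¹ * (∑ i, lam i * K i j ^ 2) - log (1 + ∑ i, K i j ^ 2)) -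
        ∑ i, lam i := by
  set γ : n → ℝ := fun j => ∑ i, K i j ^ 2
  have hγ (j : n) : 0 < 1 + γ j := by positivity
  have hGram : Kᵀ * K + 1 = diagonal fun j => 1 + γ j := by
    rw [transpose_mul_self_eq_diagonal hK, ← diagonal_one, diagonal_add]
    exact congrArg diagonal (funext fun j => add_comm _ _)
  set D := diagonal fun j => (1 + γ j)⁻¹
  have hGramD : (Kᵀ * K + 1) * D = 1 := by
    rw [hGram, diagonal_mul_diagonal, ← diagonal_one]
    exact congrArg diagonal (funext fun j => mul_inv_cancel₀ (hγ j).ne')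
  have hinv : (K * Kᵀ + 1)⁻¹ = 1 - K * D * Kᵀ := by
    refine inv_eq_right_inv ?_
    have : (K * Kᵀ + 1) * (K * D * Kᵀ) = K * Kᵀ := by
      calc (K * Kᵀ + 1) * (K * D * Kᵀ) = K * ((Kᵀ * K + 1) * D) * Kᵀ := by
            simp only [Matrix.add_mul, Matrix.mul_add, Matrix.one_mul, Matrix.mul_assoc]
        _ = K * Kᵀ := by rw [hGramD, Matrix.mul_one]
    rw [Matrix.mul_sub, this, Matrix.mul_one, add_sub_cancel_left]
  have hdet : (K * Kᵀ + 1)⁻¹.det = (∏ j, (1 + γ j))⁻¹ := by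
    rw [det_nonsing_inv, Ring.inverse_eq_inv', add_comm, det_one_add_mul_comm, add_comm, hGram,
      det_diagonal]
  rw [gaussianLogLik, hdet, hinv, Matrix.sub_mul, Matrix.one_mul, trace_sub, trace_diagonal,
    trace_mul_diagonal_mul_transpose_mul_diagonal, log_inv, log_prod fun j _ => (hγ j).ne',
    Finset.sum_sub_distrib]
  ring

end

lemma inv_one_add_mul_sub_log_le_sum {ι : Type*} [Fintype ι] (x lam : ι → ℝ) :
    (1 + ∑ i, x i ^ 2)⁻¹ * (∑ i, lam i * x i ^ 2) - log (1 + ∑ i, x i ^ 2) ≤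
      ∑ i, x i ^ 2 * (∑ k, x k ^ 2)⁻¹ * logGap (max (lam i) 1) := by
  set s := ∑ i, x i ^ 2
  rcases (show 0 ≤ s by positivity).eq_or_lt with hs | hs
  · have hx (i : ι) : x i ^ 2 = 0 :=
      (Finset.sum_eq_zero_iff_of_nonneg fun k _ => sq_nonneg (x k)).mp hs.symm i
        (Finset.mem_univ i)
    simp [hx, ← hs]
  · set w : ι → ℝ := fun i => x i ^ 2 * s⁻¹
    have hw1 : ∑ i, w i = 1 := by rw [← Finset.sum_mul, mul_inv_cancel₀ hs.ne']
    set μ := ∑ i, w i * lam i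
    have hsμ : ∑ i, lam i * x i ^ 2 = s * μ := by
      rw [Finset.mul_sum]
      refine Finset.sum_congr rfl fun i _ => ?_
      simp only [w]
      field_simp
    calc (1 + s)⁻¹ * (∑ i, lam i * x i ^ 2) - log (1 + s)
        = s * μ / (1 + s) - log (1 + s) := by rw [hsμ]; ring
      _ ≤ logGap (max μ 1) := mul_div_one_add_sub_log_le hs.le μ
      _ ≤ ∑ i, w i * logGap (max (lam i) 1) := by
        simpa only [smul_eq_mul] using convexOn_logGap_max_one.map_sum_le
          (fun i _ => by positivity) hw1 fun i _ => Set.mem_univ (lam i)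

lemma gaussianLogLik_mul_transpose_add_one_le_of_isDiag {p r : ℕ}
    {K : Matrix (Fin p) (Fin r) ℝ} (hK : (Kᵀ * K).IsDiag) {lam : Fin p → ℝ} (hlam : Antitone lam) :
    gaussianLogLik (K * Kᵀ + 1) (diagonal lam) ≤
      (∑ i : Fin p, if (i : ℕ) < r then logGap (max (lam i) 1) else 0) - ∑ i, lam i := by
  rw [gaussianLogLik_mul_transpose_add_one_of_isDiag hK]
  refine sub_le_sub_right ?_ _
  set t : Fin p → Fin r → ℝ := fun i j => K i j ^ 2 * (∑ k, K k j ^ 2)⁻¹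
  have hcol (j : Fin r) : ∑ i, t i j ≤ 1 := by
    rw [← Finset.sum_mul]; exact mul_inv_le_one
  have hmass : ∑ i, ∑ j, t i j ≤ r := by
    rw [Finset.sum_comm]
    simpa using Finset.sum_le_sum fun j (_ : j ∈ Finset.univ) => hcol j
  calc ∑ j, ((1 + ∑ i, K i j ^ 2)⁻¹ * (∑ i, lam i * K i j ^ 2) - log (1 + ∑ i, K i j ^ 2))
      ≤ ∑ j, ∑ i, t i j * logGap (max (lam i) 1) :=
        Finset.sum_le_sum fun j _ => inv_one_add_mul_sub_log_le_sum (fun i => K i j) lam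
    _ = ∑ i, (∑ j, t i j) * logGap (max (lam i) 1) := by
        rw [Finset.sum_comm]; simp only [Finset.sum_mul]
    _ ≤ ∑ i : Fin p, if (i : ℕ) < r then logGap (max (lam i) 1) else 0 :=
        sum_mul_le_sum_ite_lt (fun i => by positivity) (sum_sq_mul_inv_sum_sq_le_one hK) hmass
          (fun i => logGap_nonneg (zero_lt_one.trans_le (le_max_right _ _)))
          (monotone_logGap_max_one.comp_antitone hlam)

lemma exists_mul_transpose_eq_and_isDiag {m n : Type*} [Fintype m] [Fintype n] [DecidableEq n]
    (K : Matrix m n ℝ) : ∃ L : Matrix m n ℝ, L * Lᵀ = K * Kᵀ ∧ (Lᵀ * L).IsDiag := by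
  have hG : (Kᵀ * K).IsHermitian := by
    simpa using (posSemidef_conjTranspose_mul_self K).isHermitian
  set Q : Matrix n n ℝ := (hG.eigenvectorUnitary : Matrix n n ℝ)
  have hQ : Q * Qᵀ = 1 := by
    simpa [Q, star_eq_conjTranspose] using Unitary.mul_star_self_of_mem hG.eigenvectorUnitary.2
  refine ⟨K * Q, ?_, ?_⟩
  · rw [transpose_mul, Matrix.mul_assoc, ← Matrix.mul_assoc Q, hQ, Matrix.one_mul]
  · have := hG.conjStarAlgAut_star_eigenvectorUnitary
    rw [Unitary.conjStarAlgAut_star_apply] at this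
    rw [transpose_mul, Matrix.mul_assoc, ← Matrix.mul_assoc Kᵀ]
    simp only [star_eq_conjTranspose, conjTranspose_eq_transpose_of_trivial] at this
    rw [← Matrix.mul_assoc, this]
    exact isDiag_diagonal _

lemma gaussianLogLik_mul_transpose_add_one_le {p r : ℕ} (K : Matrix (Fin p) (Fin r) ℝ)
    {lam : Fin p → ℝ} (hlam : Antitone lam) :
    gaussianLogLik (K * Kᵀ + 1) (diagonal lam) ≤
      (∑ i : Fin p, if (i : ℕ) < r then logGap (max (lam i) 1) else 0) - ∑ i, lam i := by
  obtain ⟨L, hLK, hL⟩ := exists_mul_transpose_eq_and_isDiag K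
  exact hLK ▸ gaussianLogLik_mul_transpose_add_one_le_of_isDiag hL hlam

def rectDiagonal {p r : ℕ} (hr : r ≤ p) (s : Fin p → ℝ) : Matrix (Fin p) (Fin r) ℝ :=
  of fun i j => if i = Fin.castLE hr j then s i else 0

section

variable {p r : ℕ} (hr : r ≤ p) (s : Fin p → ℝ)

lemma mul_rectDiagonal_apply {m : Type*} (M : Matrix m (Fin p) ℝ) (i : m) (j : Fin r) :
    (M * rectDiagonal hr s) i j = M i (Fin.castLE hr j) * s (Fin.castLE hr j) := by
  simp [rectDiagonal, mul_apply]

lemma rectDiagonal_mul_transpose :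
    rectDiagonal hr s * (rectDiagonal hr s)ᵀ =
      diagonal fun i : Fin p => if (i : ℕ) < r then s i ^ 2 else 0 := by
  ext i k
  simp only [mul_apply, rectDiagonal, of_apply, transpose_apply, diagonal_apply]
  by_cases hi : (i : ℕ) < r
  · rw [Fintype.sum_eq_single ⟨i, hi⟩ fun j hj => by
      rw [if_neg fun h : i = Fin.castLE hr j => hj (Fin.ext (congrArg Fin.val h).symm), zero_mul]]
    by_cases hik : i = k
    · subst hik; simp [hi, sq]
    · simp [hik, Ne.symm hik]
  · refine (Finset.sum_eq_zero fun j _ => ?_).trans (by simp [hi])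
    rw [if_neg fun h : i = Fin.castLE hr j => hi (h ▸ j.isLt), zero_mul]

end

lemma gaussianLogLik_diagonal_max_sub_one_add_one {p r : ℕ} (lam : Fin p → ℝ) :
    gaussianLogLik (diagonal (fun i : Fin p => if (i : ℕ) < r then max (lam i - 1) 0 else 0) + 1)
        (diagonal lam) =
      (∑ i : Fin p, if (i : ℕ) < r then logGap (max (lam i) 1) else 0) - ∑ i, lam i := by
  have hsum : (diagonal fun i : Fin p => if (i : ℕ) < r then max (lam i - 1) 0 else 0) + 1 =
      diagonal fun i : Fin p => if (i : ℕ) < r then max (lam i) 1 else 1 := by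
    rw [← diagonal_one, diagonal_add]
    congr 1; ext i
    split_ifs
    · rw [← max_add_add_right, sub_add_cancel, zero_add]
    · exact zero_add 1
  rw [hsum, gaussianLogLik_diagonal (fun i => by split_ifs <;> positivity),
    ← Finset.sum_sub_distrib]
  refine Finset.sum_congr rfl fun i _ => ?_
  split_ifs
  · exact neg_log_max_one_sub_inv_mul (lam i)
  · simp

section Whitening

variable {n : Type*} [Fintype n] [DecidableEq n] {ψ : n → ℝ} {U : Matrix n n ℝ}

lemma diagonal_sqrt_mul_diagonal_inv_sqrt (hψ : ∀ i, 0 < ψ i) :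
    diagonal (fun k => √(ψ k)) * diagonal (fun k => (√(ψ k))⁻¹) = 1 := by
  rw [diagonal_mul_diagonal, ← diagonal_one]
  exact congrArg diagonal (funext fun k => mul_inv_cancel₀ (sqrt_pos.mpr (hψ k)).ne')

lemma isUnit_det_diagonal_sqrt_mul (hψ : ∀ i, 0 < ψ i) (hU : U * Uᵀ = 1) :
    IsUnit (diagonal (fun k => √(ψ k)) * U).det :=
  isUnit_det_of_right_inverse (B := Uᵀ * diagonal fun k => (√(ψ k))⁻¹) <| by
    rw [Matrix.mul_assoc, ← Matrix.mul_assoc U, hU, Matrix.one_mul,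
      diagonal_sqrt_mul_diagonal_inv_sqrt hψ]

lemma diagonal_sqrt_mul_mul_transpose_self (hψ : ∀ i, 0 < ψ i) (hU : U * Uᵀ = 1) :
    diagonal (fun k => √(ψ k)) * U * (diagonal (fun k => √(ψ k)) * U)ᵀ = diagonal ψ := by
  rw [transpose_mul, diagonal_transpose, Matrix.mul_assoc, ← Matrix.mul_assoc U, hU,
    Matrix.one_mul, diagonal_mul_diagonal]
  exact congrArg diagonal (funext fun k => mul_self_sqrt (hψ k).le)

lemma diagonal_sqrt_mul_conj_eq (hψ : ∀ i, 0 < ψ i) {S M : Matrix n n ℝ}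
    (h : diagonal (fun k => (√(ψ k))⁻¹) * S * diagonal (fun k => (√(ψ k))⁻¹) = U * M * Uᵀ) :
    diagonal (fun k => √(ψ k)) * U * M * (diagonal (fun k => √(ψ k)) * U)ᵀ = S := by
  have hD := diagonal_sqrt_mul_diagonal_inv_sqrt hψ
  calc diagonal (fun k => √(ψ k)) * U * M * (diagonal (fun k => √(ψ k)) * U)ᵀ
      = diagonal (fun k => √(ψ k)) * (U * M * Uᵀ) * diagonal (fun k => √(ψ k)) := by
        rw [transpose_mul, diagonal_transpose]; simp only [Matrix.mul_assoc]
    _ = S := by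
        rw [← h]
        simp only [← Matrix.mul_assoc, hD, Matrix.one_mul]
        rw [Matrix.mul_assoc, mul_eq_one_comm.mp hD, Matrix.mul_one]

end Whitening

theorem fa_optimal_loading_update_general
    (p r : ℕ) (hr : r ≤ p)
    (ψ : Fin p → ℝ) (hψ : ∀ i, 0 < ψ i)
    (S : Matrix (Fin p) (Fin p) ℝ)
    (U : Matrix (Fin p) (Fin p) ℝ) (hU : U * Uᵀ = 1 ∧ Uᵀ * U = 1)
    (lam : Fin p → ℝ) (hsort : ∀ i j : Fin p, i ≤ j → lam j ≤ lam i)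
    (hdecomp :
      Matrix.diagonal (fun i => (Real.sqrt (ψ i))⁻¹) * S *
          Matrix.diagonal (fun i => (Real.sqrt (ψ i))⁻¹) =
        U * Matrix.diagonal lam * Uᵀ)
    (Bstar : Matrix (Fin p) (Fin r) ℝ)
    (hBstar : ∀ (i : Fin p) (j : Fin r),
      Bstar i j = (Matrix.diagonal (fun k => Real.sqrt (ψ k)) * U) i (Fin.castLE hr j) *
        Real.sqrt (max (lam (Fin.castLE hr j) - 1) 0)) :
    ∀ B : Matrix (Fin p) (Fin r) ℝ,
      Real.log ((B * Bᵀ + Matrix.diagonal ψ)⁻¹).det -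
          ((B * Bᵀ + Matrix.diagonal ψ)⁻¹ * S).trace ≤
        Real.log ((Bstar * Bstarᵀ + Matrix.diagonal ψ)⁻¹).det -
          ((Bstar * Bstarᵀ + Matrix.diagonal ψ)⁻¹ * S).trace := by
  intro B
  have hA := isUnit_det_diagonal_sqrt_mul hψ hU.1
  set E := rectDiagonal hr fun i => √(max (lam i - 1) 0)
  have hBstarE : Bstar = diagonal (fun k => √(ψ k)) * U * E := by
    ext i j; rw [hBstar, mul_rectDiagonal_apply]
  have hEE : E * Eᵀ = diagonal fun i : Fin p => if (i : ℕ) < r then max (lam i - 1) 0 else 0 := by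
    simp only [E, rectDiagonal_mul_transpose, sq_sqrt (le_max_right _ _)]
  change gaussianLogLik (B * Bᵀ + diagonal ψ) S ≤ gaussianLogLik (Bstar * Bstarᵀ + diagonal ψ) S
  rw [← diagonal_sqrt_mul_mul_transpose_self hψ hU.1, ← diagonal_sqrt_mul_conj_eq hψ hdecomp,
    gaussianLogLik_add_mul_transpose hA, gaussianLogLik_add_mul_transpose hA, hBstarE,
    nonsing_inv_mul_cancel_left _ _ hA, hEE, gaussianLogLik_diagonal_max_sub_one_add_one]
  exact sub_le_sub_right (gaussianLogLik_mul_transpose_add_one_le _ fun i j h => hsort i j h) _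

/-- optimal factor-loading update in Gaussian factor analysis.
`Ψ = diagonal ψ` is positive definite diagonal, `S ⪰ 0`,
`Ψ^{-1/2} S Ψ^{-1/2} = U (diagonal lam) Uᵀ` with orthogonal `U` and
decreasingly sorted eigenvalues `lam`.  Then
`B* = Ψ^{1/2} U D^{1/2}` (here formed directly as a `p × r` matrix, taking
`dᵢ = max (lamᵢ - 1) 0` on the first `r` coordinates) maximizes
`B ↦ log det ((BBᵀ + Ψ)⁻¹) - Tr ((BBᵀ + Ψ)⁻¹ S)` over all `p × r` matrices. -/
theorem fa_optimal_loading_update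
    (p r : ℕ) (hr : r ≤ p)
    (ψ : Fin p → ℝ) (hψ : ∀ i, 0 < ψ i)
    (S : Matrix (Fin p) (Fin p) ℝ) (hS : S.PosSemidef)
    (U : Matrix (Fin p) (Fin p) ℝ) (hU : U * Uᵀ = 1 ∧ Uᵀ * U = 1)
    (lam : Fin p → ℝ) (hsort : ∀ i j : Fin p, i ≤ j → lam j ≤ lam i)
    (hdecomp :
      Matrix.diagonal (fun i => (Real.sqrt (ψ i))⁻¹) * S *
          Matrix.diagonal (fun i => (Real.sqrt (ψ i))⁻¹) =
        U * Matrix.diagonal lam * Uᵀ)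
    (Bstar : Matrix (Fin p) (Fin r) ℝ)
    (hBstar : ∀ (i : Fin p) (j : Fin r),
      Bstar i j = (Matrix.diagonal (fun k => Real.sqrt (ψ k)) * U) i (Fin.castLE hr j) *
        Real.sqrt (max (lam (Fin.castLE hr j) - 1) 0)) :
    ∀ B : Matrix (Fin p) (Fin r) ℝ,
      Real.log ((B * Bᵀ + Matrix.diagonal ψ)⁻¹).det -
          ((B * Bᵀ + Matrix.diagonal ψ)⁻¹ * S).trace ≤
        Real.log ((Bstar * Bstarᵀ + Matrix.diagonal ψ)⁻¹).det -
          ((Bstar * Bstarᵀ + Matrix.diagonal ψ)⁻¹ * S).trace :=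
  fa_optimal_loading_update_general p r hr ψ hψ S U hU lam hsort hdecomp Bstar hBstar
end

section
/- The function f₂(φ) = Σ_{i=1}^r ( log(max{1, λ_i*(φ)}) − max{1, λ_i*(φ)} + 1 ), where λ₁*(φ) ≥ ⋯ ≥ λ_p*(φ) are the eigenvalues of Diag(φ)^{1/2} S Diag(φ)^{1/2} for a fixed positive semidefinite matrix S, is concave on the set of vectors φ ∈ ℝ^p with strictly positive entries (equivalently, −f₂ is convex). -/
/-!
Write `S = BᵀB`. The eigenvalues of `Φ^{1/2} S Φ^{1/2} = (BΦ^{1/2})ᵀ(BΦ^{1/2})` are those of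
`T(φ) = B Φ Bᵀ`, which depends linearly on `φ`. Each summand of `f₂` is a Legendre-type
infimum, `log (max 1 t) - max 1 t + 1 = min_{0 ≤ s < 1} (-s t - log (1 - s))`, so `f₂(φ)` is the
minimum over decreasing weights `s` in `[0, 1)`, vanishing beyond `r`, of
`-∑ sᵢ λᵢ(T φ) - ∑ log (1 - sᵢ)`. By Ky Fan's maximum principle, `∑ sᵢ λᵢ(T φ)` is a supremum of
linear functions of `φ`, hence convex, and `f₂` is an infimum of concave functions.
-/

open Matrix Real Finset

theorem Matrix.charpoly_toEuclideanLin {𝕜 n : Type*} [RCLike 𝕜] [Fintype n] [DecidableEq n]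
    (A : Matrix n n 𝕜) : (toEuclideanLin A).charpoly = A.charpoly := by
  rw [toEuclideanLin, toLpLin_eq_toLin, charpoly_toLin]

theorem Matrix.charpoly_mul_diagonal_mul_transpose {R n : Type*} [CommRing R] [Fintype n]
    [DecidableEq n] {U : Matrix n n R} (hU : Uᵀ * U = 1) (d : n → R) :
    (U * diagonal d * Uᵀ).charpoly = ∏ i, (Polynomial.X - Polynomial.C (d i)) := by
  rw [Matrix.mul_assoc, charpoly_mul_comm, Matrix.mul_assoc, hU, Matrix.mul_one, charpoly_diagonal]

open scoped MatrixOrder in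
theorem Matrix.PosSemidef.exists_eq_transpose_mul_self {n : Type*} [Fintype n] [DecidableEq n]
    {S : Matrix n n ℝ} (hS : S.PosSemidef) : ∃ B : Matrix n n ℝ, S = Bᵀ * B := by
  refine ⟨CFC.sqrt S, ?_⟩
  rw [← conjTranspose_eq_transpose_of_trivial, (CFC.sqrt_nonneg S).posSemidef.isHermitian.eq,
    CFC.sqrt_mul_sqrt_self S hS.nonneg]

theorem LinearMap.IsSymmetric.eigenvalues_eq_of_charpoly_eq {𝕜 E : Type*} [RCLike 𝕜]
    [NormedAddCommGroup E] [InnerProductSpace 𝕜 E] [FiniteDimensional 𝕜 E] {T : E →ₗ[𝕜] E}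
    {n : ℕ} (hT : T.IsSymmetric) (hn : Module.finrank 𝕜 E = n) {μ : Fin n → ℝ}
    (hμ : Antitone μ) (h : T.charpoly = ∏ i, (Polynomial.X - Polynomial.C (μ i : 𝕜))) :
    hT.eigenvalues hn = μ := by
  rw [← List.ofFn_inj, ← hT.sort_roots_charpoly_eq_eigenvalues hn, h,
    Polynomial.roots_prod _ _ (by simp [Finset.prod_ne_zero_iff, Polynomial.X_sub_C_ne_zero])]
  simp_rw [Polynomial.roots_X_sub_C, Finset.univ.val.bind_singleton, Multiset.map_map,
    Function.comp_def, RCLike.ofReal_re, Fin.univ_val_map, Multiset.coe_sort]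
  refine List.mergeSort_of_pairwise ?_
  simpa only [decide_eq_true_eq, ← List.sortedGE_iff_pairwise] using hμ.sortedGE_ofFn

theorem Matrix.eigenvalues_toEuclideanLin_mul_diagonal_mul_transpose {n : ℕ}
    (B : Matrix (Fin n) (Fin n) ℝ) {φ μ : Fin n → ℝ} (hφ : ∀ i, 0 ≤ φ i) (hμ : Antitone μ)
    {U : Matrix (Fin n) (Fin n) ℝ} (hU : Uᵀ * U = 1)
    (h : diagonal (fun i => √(φ i)) * (Bᵀ * B) * diagonal (fun i => √(φ i)) =
      U * diagonal μ * Uᵀ)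
    (hT : (toEuclideanLin (B * diagonal φ * Bᵀ)).IsSymmetric) :
    hT.eigenvalues finrank_euclideanSpace_fin = μ := by
  set D := diagonal fun i => √(φ i)
  have hD : diagonal φ = D * D := by simp only [D, diagonal_mul_diagonal, mul_self_sqrt (hφ _)]
  refine hT.eigenvalues_eq_of_charpoly_eq _ hμ ?_
  simp only [RCLike.ofReal_real_eq_id, id_eq]
  rw [charpoly_toEuclideanLin, hD, ← charpoly_mul_diagonal_mul_transpose hU, ← h]
  have := charpoly_mul_comm (B * D) (D * Bᵀ)
  simp only [Matrix.mul_assoc] at this ⊢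
  exact this

/-- Birkhoff's theorem reduces this to the rearrangement inequality. -/
theorem Monovary.dotProduct_mulVec_le {n : Type*} [Fintype n] [DecidableEq n] {s μ : n → ℝ}
    (h : Monovary s μ) {d : Matrix n n ℝ} (hd : d ∈ doublyStochastic ℝ n) :
    s ⬝ᵥ (d *ᵥ μ) ≤ s ⬝ᵥ μ := by
  have hlin : IsLinearMap ℝ fun d : Matrix n n ℝ => s ⬝ᵥ (d *ᵥ μ) :=
    ⟨fun _ _ => by rw [add_mulVec, dotProduct_add],
      fun _ _ => by rw [smul_mulVec, dotProduct_smul, smul_eq_mul]⟩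
  rw [← SetLike.mem_coe, doublyStochastic_eq_convexHull_permMatrix] at hd
  refine convexHull_min ?_ (convex_halfSpace_le hlin _) hd
  rintro _ ⟨σ, rfl⟩
  simpa [permMatrix_mulVec, dotProduct] using h.sum_mul_comp_perm_le_sum_mul (σ := σ)

section InnerProductSpace

open scoped RealInnerProductSpace

variable {E : Type*} [NormedAddCommGroup E] [InnerProductSpace ℝ E]

theorem OrthonormalBasis.inner_sq_mem_doublyStochastic {ι : Type*} [Fintype ι] [DecidableEq ι]
    (b e : OrthonormalBasis ι ℝ E) :
    Matrix.of (fun i j => ⟪b i, e j⟫ ^ 2) ∈ doublyStochastic ℝ ι := by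
  refine mem_doublyStochastic_iff_sum.2 ⟨fun i j => sq_nonneg _, fun i => ?_, fun j => ?_⟩
  · simp [e.sum_sq_inner_left, b.orthonormal.1 i]
  · simp [b.sum_sq_inner_right, e.orthonormal.1 j]

namespace LinearMap.IsSymmetric

variable [FiniteDimensional ℝ E] {T : E →ₗ[ℝ] E} {n : ℕ}

theorem inner_apply_self_eq_sum (hT : T.IsSymmetric) (hn : Module.finrank ℝ E = n) (x : E) :
    ⟪x, T x⟫ = ∑ j, ⟪x, hT.eigenvectorBasis hn j⟫ ^ 2 * hT.eigenvalues hn j := by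
  rw [← (hT.eigenvectorBasis hn).sum_inner_mul_inner]
  refine Finset.sum_congr rfl fun j _ => ?_
  rw [← hT, hT.apply_eigenvectorBasis, real_inner_smul_left, real_inner_comm]
  simp only [RCLike.ofReal_real_eq_id, id_eq]
  ring

/-- Ky Fan's maximum principle, in weighted form. -/
theorem sum_mul_inner_le_sum_mul_eigenvalues (hT : T.IsSymmetric) (hn : Module.finrank ℝ E = n)
    (b : OrthonormalBasis (Fin n) ℝ E) {s : Fin n → ℝ} (hs : Antitone s) :
    ∑ i, s i * ⟪b i, T (b i)⟫ ≤ ∑ i, s i * hT.eigenvalues hn i := by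
  simpa [dotProduct, mulVec, hT.inner_apply_self_eq_sum hn] using
    (hs.monovary (hT.eigenvalues_antitone hn)).dotProduct_mulVec_le
      (b.inner_sq_mem_doublyStochastic (hT.eigenvectorBasis hn))

theorem convexOn_sum_mul_eigenvalues {V : Type*} [AddCommGroup V] [Module ℝ V]
    (T : V →ₗ[ℝ] E →ₗ[ℝ] E) (hT : ∀ v, (T v).IsSymmetric) (hn : Module.finrank ℝ E = n)
    {s : Fin n → ℝ} (hs : Antitone s) :
    ConvexOn ℝ Set.univ fun v => ∑ i, s i * (hT v).eigenvalues hn i := by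
  refine ⟨convex_univ, fun x _ y _ a b ha hb _ => ?_⟩
  set e := (hT (a • x + b • y)).eigenvectorBasis hn
  have hx := (hT x).sum_mul_inner_le_sum_mul_eigenvalues hn e hs
  have hy := (hT y).sum_mul_inner_le_sum_mul_eigenvalues hn e hs
  calc ∑ i, s i * (hT (a • x + b • y)).eigenvalues hn i
      = ∑ i, s i * ⟪e i, T (a • x + b • y) (e i)⟫ := by
        refine Finset.sum_congr rfl fun i _ => ?_
        rw [(hT _).apply_eigenvectorBasis, real_inner_smul_right, real_inner_self_eq_norm_sq,
          e.norm_eq_one]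
        simp
    _ = a * ∑ i, s i * ⟪e i, T x (e i)⟫ + b * ∑ i, s i * ⟪e i, T y (e i)⟫ := by
        simp only [map_add, map_smul, LinearMap.add_apply, LinearMap.smul_apply, inner_add_right,
          real_inner_smul_right, Finset.mul_sum]
        rw [← Finset.sum_add_distrib]
        exact Finset.sum_congr rfl fun i _ => by ring
    _ ≤ _ := by simp only [smul_eq_mul]; gcongr

end LinearMap.IsSymmetric

end InnerProductSpace

theorem log_max_one_sub_max_one_add_one_le {s : ℝ} (hs₀ : 0 ≤ s) (hs₁ : s < 1) (t : ℝ) :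
    log (max 1 t) - max 1 t + 1 ≤ -(s * t) - log (1 - s) := by
  have hm : 1 ≤ max 1 t := le_max_left _ _
  have hlog := log_le_sub_one_of_pos (mul_pos (by linarith) (sub_pos.2 hs₁) :
    0 < max 1 t * (1 - s))
  rw [log_mul (by positivity) (by linarith)] at hlog
  nlinarith [le_max_right 1 t]

theorem log_max_one_sub_max_one_add_one_eq (t : ℝ) :
    log (max 1 t) - max 1 t + 1 =
      -((1 - (max 1 t)⁻¹) * t) - log (1 - (1 - (max 1 t)⁻¹)) := by
  rw [sub_sub_cancel, log_inv]
  rcases le_total t 1 with ht | ht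
  · simp [max_eq_left ht]
  · rw [max_eq_right ht]
    field_simp
    ring

/-- The weights at which `log_max_one_sub_max_one_add_one_le` is attained, cut off after `r`. -/
noncomputable def dualWeights {n : ℕ} (r : ℕ) (μ : Fin n → ℝ) (i : Fin n) : ℝ :=
  if (i : ℕ) < r then 1 - (max 1 (μ i))⁻¹ else 0

section dualWeights

variable {n : ℕ} (r : ℕ) (μ : Fin n → ℝ)

theorem dualWeights_of_lt {i : Fin n} (hi : (i : ℕ) < r) :
    dualWeights r μ i = 1 - (max 1 (μ i))⁻¹ :=
  if_pos hi

theorem dualWeights_nonneg (i : Fin n) : 0 ≤ dualWeights r μ i := by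
  unfold dualWeights; split_ifs
  · exact sub_nonneg.2 (inv_le_one_of_one_le₀ (le_max_left _ _))
  · rfl

theorem dualWeights_lt_one (i : Fin n) : dualWeights r μ i < 1 := by
  unfold dualWeights; split_ifs
  · exact sub_lt_self _ (inv_pos.2 (lt_of_lt_of_le one_pos (le_max_left _ _)))
  · exact one_pos

theorem Antitone.dualWeights {μ : Fin n → ℝ} (hμ : Antitone μ) :
    Antitone (dualWeights r μ) := fun i j hij => by
  by_cases hj : (j : ℕ) < r
  · have hi : (i : ℕ) < r := (Fin.le_def.1 hij).trans_lt hj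
    simp only [_root_.dualWeights, if_pos hi, if_pos hj]
    gcongr
    exact hμ hij
  · simpa only [_root_.dualWeights, if_neg hj] using dualWeights_nonneg r μ i

theorem sum_filter_dualWeights_mul (ν : Fin n → ℝ) :
    ∑ i ∈ univ.filter (fun i : Fin n => (i : ℕ) < r), dualWeights r μ i * ν i =
      ∑ i, dualWeights r μ i * ν i :=
  Finset.sum_subset (Finset.subset_univ _) fun i _ hi => by simp_all [dualWeights]

end dualWeights

theorem concaveOn_sum_log_max_one_sub_max_one {V : Type*} [AddCommGroup V] [Module ℝ V]
    {C : Set V} (hC : Convex ℝ C) {n : ℕ} (r : ℕ) (Λ : V → Fin n → ℝ)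
    (hΛ : ∀ v ∈ C, Antitone (Λ v))
    (hconv : ∀ s : Fin n → ℝ, Antitone s → ConvexOn ℝ C fun v => ∑ i, s i * Λ v i) :
    ConcaveOn ℝ C fun v => ∑ i ∈ univ.filter (fun i : Fin n => (i : ℕ) < r),
      (log (max 1 (Λ v i)) - max 1 (Λ v i) + 1) := by
  refine ⟨hC, fun x hx y hy a b ha hb hab => ?_⟩
  set z := a • x + b • y
  set F := univ.filter (fun i : Fin n => (i : ℕ) < r)
  set s := dualWeights r (Λ z)
  set K := ∑ i ∈ F, log (1 - s i)
  have hle : ∀ v, ∑ i ∈ F, (log (max 1 (Λ v i)) - max 1 (Λ v i) + 1) ≤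
      -∑ i, s i * Λ v i - K := fun v => by
    rw [← sum_filter_dualWeights_mul, ← Finset.sum_neg_distrib, ← Finset.sum_sub_distrib]
    exact Finset.sum_le_sum fun i _ =>
      log_max_one_sub_max_one_add_one_le (dualWeights_nonneg ..) (dualWeights_lt_one ..) _
  have heq : ∑ i ∈ F, (log (max 1 (Λ z i)) - max 1 (Λ z i) + 1) =
      -∑ i, s i * Λ z i - K := by
    rw [← sum_filter_dualWeights_mul, ← Finset.sum_neg_distrib, ← Finset.sum_sub_distrib]
    refine Finset.sum_congr rfl fun i hi => ?_
    simp only [s, dualWeights_of_lt r _ (Finset.mem_filter.1 hi).2]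
    exact log_max_one_sub_max_one_add_one_eq _
  have hz : ∑ i, s i * Λ z i ≤ a * ∑ i, s i * Λ x i + b * ∑ i, s i * Λ y i :=
    (hconv s ((hΛ z (hC hx hy ha hb hab)).dualWeights r)).2 hx hy ha hb hab
  have hK : K = a * K + b * K := by rw [← add_mul, hab, one_mul]
  simp only [smul_eq_mul]
  rw [heq]
  linarith [mul_le_mul_of_nonneg_left (hle x) ha, mul_le_mul_of_nonneg_left (hle y) hb]

theorem fa_f2_concave_general
    (p r : ℕ)
    (S : Matrix (Fin p) (Fin p) ℝ) (hS : S.PosSemidef)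
    (lam : (Fin p → ℝ) → Fin p → ℝ)
    (hlam : ∀ φ : Fin p → ℝ, (∀ i, 0 < φ i) →
      (∃ U : Matrix (Fin p) (Fin p) ℝ, U * Uᵀ = 1 ∧ Uᵀ * U = 1 ∧
        Matrix.diagonal (fun i => Real.sqrt (φ i)) * S *
            Matrix.diagonal (fun i => Real.sqrt (φ i)) =
          U * Matrix.diagonal (lam φ) * Uᵀ) ∧
      (∀ i j : Fin p, i ≤ j → lam φ j ≤ lam φ i)) :
    ConcaveOn ℝ {φ : Fin p → ℝ | ∀ i, 0 < φ i}
      (fun φ => ∑ i ∈ Finset.univ.filter (fun i : Fin p => (i : ℕ) < r),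
        (Real.log (max 1 (lam φ i)) - max 1 (lam φ i) + 1)) := by
  obtain ⟨B, rfl⟩ := hS.exists_eq_transpose_mul_self
  have hconvex : Convex ℝ {φ : Fin p → ℝ | ∀ i, 0 < φ i} := by
    simpa [Set.pi] using convex_pi (s := Set.univ) fun (_ : Fin p) _ => convex_Ioi (0 : ℝ)
  let T : (Fin p → ℝ) →ₗ[ℝ] Module.End ℝ (EuclideanSpace ℝ (Fin p)) :=
    toEuclideanLin.toLinearMap ∘ₗ LinearMap.mulRight ℝ Bᵀ ∘ₗ LinearMap.mulLeft ℝ B ∘ₗ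
      diagonalLinearMap (Fin p) ℝ ℝ
  have hT : ∀ φ, (T φ).IsSymmetric := fun φ => isSymmetric_toEuclideanLin_iff.2 <| by
    simpa [conjTranspose_eq_transpose_of_trivial] using
      isHermitian_mul_mul_conjTranspose B (isHermitian_diagonal φ)
  refine concaveOn_sum_log_max_one_sub_max_one hconvex r lam (fun φ hφ => (hlam φ hφ).2)
    fun s hs => ?_
  refine ((LinearMap.IsSymmetric.convexOn_sum_mul_eigenvalues T hT finrank_euclideanSpace_fin
    hs).subset (Set.subset_univ _) hconvex).congr fun φ hφ => ?_
  obtain ⟨⟨U, -, hU, h⟩, hanti⟩ := hlam φ hφ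
  exact congrArg (fun μ => ∑ i, s i * μ i) <|
    eigenvalues_toEuclideanLin_mul_diagonal_mul_transpose B (fun i => (hφ i).le) hanti hU h (hT φ)

/-- concavity of `f₂` in the concentrated Gaussian FA objective.
For a fixed positive semidefinite `S`, `lam φ` lists (in decreasing order) the
eigenvalues of `Diag(φ)^{1/2} S Diag(φ)^{1/2}` for every `φ` in the positive
orthant (expressed via an orthogonal eigendecomposition).  Then
`f₂(φ) = ∑_{i<r} (log (max 1 (lam φ i)) - max 1 (lam φ i) + 1)` is concave on
the positive orthant, i.e. `-f₂` is convex. -/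
theorem fa_f2_concave
    (p r : ℕ) (hr : r ≤ p)
    (S : Matrix (Fin p) (Fin p) ℝ) (hS : S.PosSemidef)
    (lam : (Fin p → ℝ) → Fin p → ℝ)
    (hlam : ∀ φ : Fin p → ℝ, (∀ i, 0 < φ i) →
      (∃ U : Matrix (Fin p) (Fin p) ℝ, U * Uᵀ = 1 ∧ Uᵀ * U = 1 ∧
        Matrix.diagonal (fun i => Real.sqrt (φ i)) * S *
            Matrix.diagonal (fun i => Real.sqrt (φ i)) =
          U * Matrix.diagonal (lam φ) * Uᵀ) ∧
      (∀ i j : Fin p, i ≤ j → lam φ j ≤ lam φ i)) :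
    ConcaveOn ℝ {φ : Fin p → ℝ | ∀ i, 0 < φ i}
      (fun φ => ∑ i ∈ Finset.univ.filter (fun i : Fin p => (i : ℕ) < r),
        (Real.log (max 1 (lam φ i)) - max 1 (lam φ i) + 1)) :=
  fa_f2_concave_general p r S hS lam hlam
end

section
/- Let S ⪰ 0 be p×p, Ψ a positive definite diagonal matrix, and let λ₁ ≥ ⋯ ≥ λ_p be the eigenvalues of M = Ψ^{-1/2} S Ψ^{-1/2}. With B* = Ψ^{1/2} U D^{1/2} as in the optimal FA update (D = Diag(max(λ_i−1,0) for i ≤ r, 0 otherwise)), the resulting covariance Σ* = B*B*ᵀ + Ψ satisfies Ψ^{-1/2} Σ* Ψ^{-1/2} = U Diag(max{λ₁,1},…,max{λ_r,1},1,…,1) Uᵀ, i.e., the optimum 'clips' the top r eigenvalues of M from below at 1 and sets the rest to 1. -/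
open Matrix Real

/-! With `D = diag(max(λᵢ - 1, 0))` on the first `r` indices and `0` elsewhere, the loading
`B* = Ψ^{1/2} U D^{1/2}` gives `B* B*ᵀ = Ψ^{1/2} U D Uᵀ Ψ^{1/2}`, while `Ψ = Ψ^{1/2} U Uᵀ Ψ^{1/2}`
because `U` is orthogonal. Conjugating by `Ψ^{-1/2}` therefore leaves `U (D + I) Uᵀ`, and
`max(λ - 1, 0) + 1 = max(λ, 1)`. -/

namespace Matrix

theorem submatrix_id_mul_transpose_submatrix_id {l m n k R : Type*} [Fintype l] [Fintype n]
    [DecidableEq n] [Semiring R] (A : Matrix m n R) (B : Matrix k n R) {f : l → n}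
    (hf : Function.Injective f) :
    A.submatrix id f * (B.submatrix id f)ᵀ =
      A * diagonal ((Set.range f).indicator (1 : n → R)) * Bᵀ := by
  ext i j
  rw [mul_apply, mul_apply]
  simp only [mul_diagonal, submatrix_apply, transpose_apply, id, Set.indicator_apply,
    Pi.one_apply, mul_ite, ite_mul, mul_one, mul_zero, zero_mul]
  rw [← Finset.sum_filter]
  refine (Finset.sum_image (f := fun x => A i x * B j x) fun x _ y _ h => hf h).symm.trans ?_
  congr 1
  ext x
  simp

theorem diagonal_inv_mul_diagonal_conj_mul_diagonal_inv {n K : Type*} [Fintype n] [DecidableEq n]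
    [Field K] {s : n → K} (hs : ∀ i, s i ≠ 0) (X : Matrix n n K) :
    diagonal s⁻¹ * (diagonal s * X * diagonal s) * diagonal s⁻¹ = X := by
  have hinv_mul : diagonal s⁻¹ * diagonal s = 1 := by
    rw [diagonal_mul_diagonal, ← diagonal_one]
    exact congrArg diagonal (funext fun i => inv_mul_cancel₀ (hs i))
  have hmul_inv : diagonal s * diagonal s⁻¹ = 1 := by
    rw [diagonal_mul_diagonal, ← diagonal_one]
    exact congrArg diagonal (funext fun i => mul_inv_cancel₀ (hs i))
  calc diagonal s⁻¹ * (diagonal s * X * diagonal s) * diagonal s⁻¹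
      = (diagonal s⁻¹ * diagonal s) * X * (diagonal s * diagonal s⁻¹) := by
        simp only [Matrix.mul_assoc]
    _ = X := by rw [hinv_mul, hmul_inv, Matrix.one_mul, Matrix.mul_one]

end Matrix

theorem max_sub_zero_add {α : Type*} [AddCommGroup α] [LinearOrder α] [IsOrderedAddMonoid α]
    (x a : α) : max (x - a) 0 + a = max x a := by
  rw [← max_add_add_right, sub_add_cancel, zero_add]

theorem fa_optimum_clips_eigenvalues_general
    (p r : ℕ) (hr : r ≤ p)
    (ψ : Fin p → ℝ) (hψ : ∀ i, 0 < ψ i)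
    (U : Matrix (Fin p) (Fin p) ℝ) (hU : U * Uᵀ = 1 ∧ Uᵀ * U = 1)
    (lam : Fin p → ℝ)
    (Bstar : Matrix (Fin p) (Fin r) ℝ)
    (hBstar : ∀ (i : Fin p) (j : Fin r),
      Bstar i j = (Matrix.diagonal (fun k => Real.sqrt (ψ k)) * U) i (Fin.castLE hr j) *
        Real.sqrt (max (lam (Fin.castLE hr j) - 1) 0)) :
    Matrix.diagonal (fun i => (Real.sqrt (ψ i))⁻¹) *
        (Bstar * Bstarᵀ + Matrix.diagonal ψ) *
        Matrix.diagonal (fun i => (Real.sqrt (ψ i))⁻¹) =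
      U * Matrix.diagonal
          (fun i : Fin p => if (i : ℕ) < r then max (lam i) 1 else 1) * Uᵀ := by
  set s : Fin p → ℝ := fun i => √(ψ i)
  set c : Fin p → ℝ := fun i => √(max (lam i - 1) 0)
  set P : Matrix (Fin p) (Fin p) ℝ := diagonal ((Set.range (Fin.castLE hr)).indicator 1)
  have hB : Bstar = (diagonal s * U * diagonal c).submatrix id (Fin.castLE hr) := by
    ext i j
    simp only [hBstar, submatrix_apply, id, mul_diagonal, c]
  have hΨ : diagonal ψ = diagonal s * 1 * diagonal s := by
    rw [Matrix.mul_one, diagonal_mul_diagonal]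
    exact congrArg diagonal (funext fun i => (Real.mul_self_sqrt (hψ i).le).symm)
  have hclip : diagonal c * P * diagonal c + 1 =
      diagonal (fun i : Fin p => if (i : ℕ) < r then max (lam i) 1 else 1) := by
    rw [diagonal_mul_diagonal, diagonal_mul_diagonal, ← diagonal_one, diagonal_add]
    refine congrArg diagonal (funext fun i => ?_)
    by_cases hi : (i : ℕ) < r
    · simp [hi, Fin.range_castLE, c, Real.mul_self_sqrt, max_sub_zero_add]
    · simp [hi, Fin.range_castLE]
  calc diagonal s⁻¹ * (Bstar * Bstarᵀ + diagonal ψ) * diagonal s⁻¹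
      = diagonal s⁻¹ *
          (diagonal s * (U * (diagonal c * P * diagonal c) * Uᵀ + U * Uᵀ) * diagonal s) *
          diagonal s⁻¹ := by
        rw [hB, submatrix_id_mul_transpose_submatrix_id _ _ (Fin.castLE_injective hr), hΨ, hU.1]
        simp only [transpose_mul, diagonal_transpose]
        noncomm_ring
    _ = U * (diagonal c * P * diagonal c + 1) * Uᵀ := by
        rw [diagonal_inv_mul_diagonal_conj_mul_diagonal_inv fun i => (Real.sqrt_pos.2 (hψ i)).ne']
        noncomm_ring
    _ = _ := by rw [hclip]

/-- eigenvalue clipping at the FA optimum.  With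
`M = Ψ^{-1/2} S Ψ^{-1/2} = U (diagonal lam) Uᵀ` (sorted eigenvalues) and
`B* = Ψ^{1/2} U D^{1/2}` the optimal loading update, the resulting
`Σ* = B*B*ᵀ + Ψ` satisfies
`Ψ^{-1/2} Σ* Ψ^{-1/2} = U Diag(max{lam₁,1},…,max{lam_r,1},1,…,1) Uᵀ`. -/
theorem fa_optimum_clips_eigenvalues
    (p r : ℕ) (hr : r ≤ p)
    (ψ : Fin p → ℝ) (hψ : ∀ i, 0 < ψ i)
    (S : Matrix (Fin p) (Fin p) ℝ) (hS : S.PosSemidef)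
    (U : Matrix (Fin p) (Fin p) ℝ) (hU : U * Uᵀ = 1 ∧ Uᵀ * U = 1)
    (lam : Fin p → ℝ) (hsort : ∀ i j : Fin p, i ≤ j → lam j ≤ lam i)
    (hdecomp :
      Matrix.diagonal (fun i => (Real.sqrt (ψ i))⁻¹) * S *
          Matrix.diagonal (fun i => (Real.sqrt (ψ i))⁻¹) =
        U * Matrix.diagonal lam * Uᵀ)
    (Bstar : Matrix (Fin p) (Fin r) ℝ)
    (hBstar : ∀ (i : Fin p) (j : Fin r),
      Bstar i j = (Matrix.diagonal (fun k => Real.sqrt (ψ k)) * U) i (Fin.castLE hr j) *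
        Real.sqrt (max (lam (Fin.castLE hr j) - 1) 0)) :
    Matrix.diagonal (fun i => (Real.sqrt (ψ i))⁻¹) *
        (Bstar * Bstarᵀ + Matrix.diagonal ψ) *
        Matrix.diagonal (fun i => (Real.sqrt (ψ i))⁻¹) =
      U * Matrix.diagonal
          (fun i : Fin p => if (i : ℕ) < r then max (lam i) 1 else 1) * Uᵀ :=
  fa_optimum_clips_eigenvalues_general p r hr ψ hψ U hU lam Bstar hBstar
end
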